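/- If F' ⊆ F are forests related by deleting the nodes of F \ F' from F, then for any forest G, |sim(F, G) - sim(F', G)| ≤ 2·|F \ F'|. -/

import Mathlib

/-- Ordered rooted trees with node labels from `α`. -/
inductive Tree' (α : Type) : Type
  | node (label : α) (children : List (Tree' α))

/-- An ordered forest is an ordered list of trees. -/
abbrev Forest (α : Type) := List (Tree' α)

mutual
/-- Number of nodes of a tree. -/
def Tree'.size {α : Type} : Tree' α → ℕ
  | .node _ cs => 1 + Forest.size cs
/-- Number of nodes of a forest. -/
def Forest.size {α : Type} : Forest α → ℕ
  | [] => 0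
  | t :: ts => Tree'.size t + Forest.size ts
end

/-- A single edit operation on a forest: delete a node (promoting its children, in
order, to its parent) or relabel a node. -/
inductive EditStep {α : Type} : Forest α → Forest α → Prop
  | delete (pre : Forest α) (a : α) (cs post : Forest α) :
      EditStep (pre ++ Tree'.node a cs :: post) (pre ++ cs ++ post)
  | relabel (pre : Forest α) (a b : α) (cs post : Forest α) :
      EditStep (pre ++ Tree'.node a cs :: post) (pre ++ Tree'.node b cs :: post)
  | inside (pre : Forest α) (a : α) {cs cs' : Forest α} (post : Forest α) :
      EditStep cs cs' →
      EditStep (pre ++ Tree'.node a cs :: post) (pre ++ Tree'.node a cs' :: post)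

/-- `EditSteps n F G`: `G` is obtained from `F` by exactly `n` edit operations. -/
inductive EditSteps {α : Type} : ℕ → Forest α → Forest α → Prop
  | refl (F : Forest α) : EditSteps 0 F F
  | tail {n : ℕ} {F G H : Forest α} : EditSteps n F G → EditStep G H → EditSteps (n + 1) F H

/-- The (unweighted) tree edit distance: the minimum total number of relabelings
and deletions applied to `F1` and `F2` so that they become identical. -/
noncomputable def ed {α : Type} (F1 F2 : Forest α) : ℕ :=
  sInf {k | ∃ (k1 k2 : ℕ) (G : Forest α), k = k1 + k2 ∧ EditSteps k1 F1 G ∧ EditSteps k2 F2 G}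

/-- The similarity between two forests. -/
noncomputable def sim {α : Type} (F1 F2 : Forest α) : ℤ :=
  (Forest.size F1 : ℤ) + Forest.size F2 - ed F1 F2

/-- A single node-removal operation on a forest. -/
inductive DelStep {α : Type} : Forest α → Forest α → Prop
  | delete (pre : Forest α) (a : α) (cs post : Forest α) :
      DelStep (pre ++ Tree'.node a cs :: post) (pre ++ cs ++ post)
  | inside (pre : Forest α) (a : α) {cs cs' : Forest α} (post : Forest α) :
      DelStep cs cs' →
      DelStep (pre ++ Tree'.node a cs :: post) (pre ++ Tree'.node a cs' :: post)

/-- `DelSteps k F F'`: `F'` is obtained from `F` by exactly `k` node removals. -/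
inductive DelSteps {α : Type} : ℕ → Forest α → Forest α → Prop
  | refl (F : Forest α) : DelSteps 0 F F
  | tail {n : ℕ} {F G H : Forest α} : DelSteps n F G → DelStep G H → DelSteps (n + 1) F H

/-!
Removing one node lowers `|F|` by exactly one and moves `ed(F, G)` by at most one in either
direction, so it moves `sim(F, G)` by at most two; `k` removals are handled by the triangle
inequality. Prepending the removal to an optimal script for `F'` gives `ed(F, G) ≤ ed(F', G) + 1`.
Conversely, a removal and an edit step of the same forest can be joined by at most one edit and
at most one removal (a local diamond), so the removal can be pushed through an optimal script
for `F` without lengthening it; at worst it survives as one removal applied to the common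
target, charged to the side of `G`. Hence `ed(F', G) ≤ ed(F, G) + 1`.
-/

open Relation

theorem Relation.ReflGen.lift {β γ : Type*} {r : β → β → Prop} {s : γ → γ → Prop} (f : β → γ)
    (hf : ∀ a b, r a b → s (f a) (f b)) {a b : β} : ReflGen r a b → ReflGen s (f a) (f b)
  | .refl => .refl
  | .single h => .single (hf _ _ h)

theorem append_cons_eq_append_cons_cases {β : Type*} {x x' : β} {p q p' q' : List β}
    (h : p ++ x :: q = p' ++ x' :: q') :
    (p = p' ∧ x = x' ∧ q = q') ∨
    (∃ m, p' = p ++ x :: m ∧ q = m ++ x' :: q') ∨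
    (∃ m, p = p' ++ x' :: m ∧ q' = m ++ x :: q) := by
  rcases List.append_eq_append_iff.mp h with ⟨_ | ⟨y, m⟩, rfl, h'⟩ | ⟨_ | ⟨y, m⟩, rfl, h'⟩
  · simp_all
  · simp only [List.cons_append, List.cons.injEq] at h'
    obtain ⟨rfl, rfl⟩ := h'
    exact .inr (.inl ⟨m, rfl, rfl⟩)
  · simp_all [eq_comm]
  · simp only [List.cons_append, List.cons.injEq] at h'
    obtain ⟨rfl, rfl⟩ := h'
    exact .inr (.inr ⟨m, rfl, rfl⟩)

variable {α : Type}

theorem Forest.size_append (F₁ F₂ : Forest α) :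
    Forest.size (F₁ ++ F₂) = Forest.size F₁ + Forest.size F₂ := by
  induction F₁ with
  | nil => simp [Forest.size]
  | cons t ts ih => simp [Forest.size, ih, Nat.add_assoc]

theorem DelStep.size_eq {F F' : Forest α} (h : DelStep F F') :
    Forest.size F = Forest.size F' + 1 := by
  induction h with
  | delete => simp only [Forest.size_append, Forest.size, Tree'.size]; omega
  | inside _ _ _ _ ih => simp only [Forest.size_append, Forest.size, Tree'.size, ih]; omega

/-- `TreeEdit t v` (resp. `TreeDel t v`): a step of `EditStep` (resp. `DelStep`) acting on the
single tree `t`, which it replaces by the forest `v`. -/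
inductive TreeEdit : Tree' α → Forest α → Prop
  | delete (a : α) (cs : Forest α) : TreeEdit (.node a cs) cs
  | relabel (a b : α) (cs : Forest α) : TreeEdit (.node a cs) [.node b cs]
  | inside (a : α) {cs cs' : Forest α} : EditStep cs cs' → TreeEdit (.node a cs) [.node a cs']

inductive TreeDel : Tree' α → Forest α → Prop
  | delete (a : α) (cs : Forest α) : TreeDel (.node a cs) cs
  | inside (a : α) {cs cs' : Forest α} : DelStep cs cs' → TreeDel (.node a cs) [.node a cs']

theorem TreeEdit.editStep {t : Tree' α} {v : Forest α} (h : TreeEdit t v) (p q : Forest α) :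
    EditStep (p ++ t :: q) (p ++ v ++ q) := by
  cases h with
  | delete a cs => exact .delete p a _ q
  | relabel a b cs => simpa using EditStep.relabel p a b cs q
  | inside a h => simpa using EditStep.inside p a q h

theorem TreeDel.delStep {t : Tree' α} {v : Forest α} (h : TreeDel t v) (p q : Forest α) :
    DelStep (p ++ t :: q) (p ++ v ++ q) := by
  cases h with
  | delete a cs => exact .delete p a _ q
  | inside a h => simpa using DelStep.inside p a q h

theorem EditStep.exists_treeEdit {F H : Forest α} (h : EditStep F H) :
    ∃ p t v q, F = p ++ t :: q ∧ H = p ++ v ++ q ∧ TreeEdit t v := by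
  cases h with
  | delete p a cs q => exact ⟨p, _, _, q, rfl, rfl, .delete a cs⟩
  | relabel p a b cs q => exact ⟨p, _, _, q, rfl, by simp, .relabel a b cs⟩
  | inside p a q h => exact ⟨p, _, _, q, rfl, by simp, .inside a h⟩

theorem DelStep.exists_treeDel {F H : Forest α} (h : DelStep F H) :
    ∃ p t v q, F = p ++ t :: q ∧ H = p ++ v ++ q ∧ TreeDel t v := by
  cases h with
  | delete p a cs q => exact ⟨p, _, _, q, rfl, rfl, .delete a cs⟩
  | inside p a q h => exact ⟨p, _, _, q, rfl, by simp, .inside a h⟩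

theorem EditStep.append_append {F H : Forest α} (h : EditStep F H) (p q : Forest α) :
    EditStep (p ++ F ++ q) (p ++ H ++ q) := by
  obtain ⟨p', t, v, q', rfl, rfl, ht⟩ := h.exists_treeEdit
  simpa using ht.editStep (p ++ p') (q' ++ q)

theorem DelStep.append_append {F H : Forest α} (h : DelStep F H) (p q : Forest α) :
    DelStep (p ++ F ++ q) (p ++ H ++ q) := by
  obtain ⟨p', t, v, q', rfl, rfl, ht⟩ := h.exists_treeDel
  simpa using ht.delStep (p ++ p') (q' ++ q)

theorem TreeDel.exists_reflGen_of_editStep {p q H : Forest α} {t : Tree' α} {u : Forest α}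
    (hu : TreeDel t u)
    (hroot : ∀ v, TreeEdit t v → ∃ w, ReflGen EditStep u w ∧ ReflGen DelStep v w)
    (he : EditStep (p ++ t :: q) H) :
    ∃ W, ReflGen EditStep (p ++ u ++ q) W ∧ ReflGen DelStep H W := by
  obtain ⟨p', t', v, q', hF, rfl, hv⟩ := he.exists_treeEdit
  rcases append_cons_eq_append_cons_cases hF with ⟨rfl, rfl, rfl⟩ | ⟨m, rfl, rfl⟩ | ⟨m, rfl, rfl⟩
  · obtain ⟨w, huw, hvw⟩ := hroot v hv
    exact ⟨p ++ w ++ q, huw.lift _ fun _ _ h => h.append_append p q,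
      hvw.lift _ fun _ _ h => h.append_append p q⟩
  -- steps at disjoint positions commute
  · refine ⟨p ++ u ++ m ++ v ++ q', .single ?_, .single ?_⟩
    · simpa using hv.editStep (p ++ u ++ m) q'
    · simpa using hu.delStep p (m ++ v ++ q')
  · refine ⟨p' ++ v ++ m ++ u ++ q, .single ?_, .single ?_⟩
    · simpa using hv.editStep p' (m ++ u ++ q)
    · simpa using hu.delStep (p' ++ v ++ m) q

theorem DelStep.exists_reflGen_of_editStep {F F' H : Forest α} (hd : DelStep F F')
    (he : EditStep F H) : ∃ W, ReflGen EditStep F' W ∧ ReflGen DelStep H W := by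
  induction hd generalizing H with
  | delete p a cs q =>
    refine TreeDel.exists_reflGen_of_editStep (.delete a cs) (fun v hv => ?_) he
    cases hv with
    | delete => exact ⟨cs, .refl, .refl⟩
    | relabel _ b => exact ⟨cs, .refl, .single (by simpa using DelStep.delete [] b cs [])⟩
    | inside _ h => exact ⟨_, .single h, .single (by simpa using DelStep.delete [] a _ [])⟩
  | @inside p a cs cs' q hcs ih =>
    rw [show p ++ Tree'.node a cs' :: q = p ++ [Tree'.node a cs'] ++ q by simp]
    refine TreeDel.exists_reflGen_of_editStep (.inside a hcs) (fun v hv => ?_) he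
    cases hv with
    | delete => exact ⟨_, .single (by simpa using EditStep.delete [] a _ []), .single hcs⟩
    | relabel _ b =>
      exact ⟨_, .single (EditStep.relabel [] a b _ []), .single (DelStep.inside [] b [] hcs)⟩
    | inside _ h =>
      obtain ⟨w, hw₁, hw₂⟩ := ih h
      exact ⟨[.node a w], hw₁.lift (fun X => [Tree'.node a X]) fun _ _ => EditStep.inside [] a [],
        hw₂.lift (fun X => [Tree'.node a X]) fun _ _ => DelStep.inside [] a []⟩

theorem EditSteps.head {n : ℕ} {F G H : Forest α} (h₁ : EditStep F G) (h₂ : EditSteps n G H) :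
    EditSteps (n + 1) F H := by
  induction h₂ with
  | refl => exact (EditSteps.refl F).tail h₁
  | tail _ step ih => exact (ih h₁).tail step

theorem EditSteps.tail_reflGen {n : ℕ} {F G H : Forest α} (hs : EditSteps n F G)
    (h : ReflGen EditStep G H) : ∃ m ≤ n + 1, EditSteps m F H := by
  cases h with
  | refl => exact ⟨n, by omega, hs⟩
  | single h => exact ⟨n + 1, le_rfl, hs.tail h⟩

theorem DelStep.toEditStep {F F' : Forest α} (h : DelStep F F') : EditStep F F' := by
  induction h with
  | delete p a cs q => exact .delete p a cs q
  | inside p a q _ ih => exact .inside p a q ih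

theorem DelStep.exists_editSteps {n : ℕ} {F F' H : Forest α} (hd : DelStep F F')
    (hs : EditSteps n F H) : ∃ m ≤ n, ∃ H', EditSteps m F' H' ∧ ReflGen DelStep H H' := by
  induction hs with
  | refl => exact ⟨0, le_rfl, F', .refl F', .single hd⟩
  | @tail n F G H _ step ih =>
    obtain ⟨m, hm, G', hG', hGG'⟩ := ih hd
    cases hGG' with
    | refl => exact ⟨m + 1, by omega, H, hG'.tail step, .refl⟩
    | single hdel =>
      obtain ⟨W, hG'W, hHW⟩ := hdel.exists_reflGen_of_editStep step
      obtain ⟨m', hm', hW⟩ := hG'.tail_reflGen hG'W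
      exact ⟨m', by omega, W, hW, hHW⟩

theorem editSteps_size_nil (F : Forest α) : EditSteps (Forest.size F) F [] := by
  induction hF : Forest.size F using Nat.strong_induction_on generalizing F with
  | _ n ih =>
  match F, hF with
  | [], rfl => exact .refl []
  | .node a cs :: ts, rfl =>
    have hsize : Forest.size (Tree'.node a cs :: ts) = Forest.size (cs ++ ts) + 1 :=
      (DelStep.delete [] a cs ts).size_eq
    rw [hsize]
    exact (ih _ (by omega) _ rfl).head (.delete [] a cs ts)

theorem ed_le {k₁ k₂ : ℕ} {F G H : Forest α} (h₁ : EditSteps k₁ F H) (h₂ : EditSteps k₂ G H) :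
    ed F G ≤ k₁ + k₂ :=
  Nat.sInf_le ⟨k₁, k₂, H, rfl, h₁, h₂⟩

theorem exists_editSteps_ed (F G : Forest α) :
    ∃ k₁ k₂ H, ed F G = k₁ + k₂ ∧ EditSteps k₁ F H ∧ EditSteps k₂ G H := by
  refine Nat.sInf_mem (s := {k | ∃ k₁ k₂ H, k = k₁ + k₂ ∧ EditSteps k₁ F H ∧ EditSteps k₂ G H}) ?_
  exact ⟨_, _, _, [], rfl, editSteps_size_nil F, editSteps_size_nil G⟩

theorem DelStep.ed_le_ed_target_add_one {F F' : Forest α} (hd : DelStep F F') (G : Forest α) :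
    ed F G ≤ ed F' G + 1 := by
  obtain ⟨k₁, k₂, H, hed, h₁, h₂⟩ := exists_editSteps_ed F' G
  have := ed_le (h₁.head hd.toEditStep) h₂
  omega

theorem DelStep.ed_target_le_ed_add_one {F F' : Forest α} (hd : DelStep F F') (G : Forest α) :
    ed F' G ≤ ed F G + 1 := by
  obtain ⟨k₁, k₂, H, hed, h₁, h₂⟩ := exists_editSteps_ed F G
  obtain ⟨m, hm, H', h₁', hHH'⟩ := hd.exists_editSteps h₁
  cases hHH' with
  | refl => have := ed_le h₁' h₂; omega
  | single hdel => have := ed_le h₁' (h₂.tail hdel.toEditStep); omega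

theorem DelStep.abs_sim_sub_le_two {F F' : Forest α} (hd : DelStep F F') (G : Forest α) :
    |sim F G - sim F' G| ≤ 2 := by
  have hsize := hd.size_eq
  have h₁ := hd.ed_le_ed_target_add_one G
  have h₂ := hd.ed_target_le_ed_add_one G
  rw [sim, sim, abs_le]
  omega

/-- If `F'` is obtained from `F` by removing `k = |F \ F'|` nodes, then for any forest `G`,
`|sim(F, G) - sim(F', G)| ≤ 2 · |F \ F'|`. -/
theorem sim_diff_le_removed {α : Type} (k : ℕ) (F F' G : Forest α)
    (h : DelSteps k F F') : |sim F G - sim F' G| ≤ 2 * (k : ℤ) := by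
  induction h with
  | refl => simp
  | @tail n F₁ F₂ F₃ _ hstep ih =>
    calc |sim F₁ G - sim F₃ G| ≤ |sim F₁ G - sim F₂ G| + |sim F₂ G - sim F₃ G| :=
          abs_sub_le _ _ _
      _ ≤ 2 * n + 2 := add_le_add ih (hstep.abs_sim_sub_le_two G)
      _ = 2 * ((n + 1 : ℕ) : ℤ) := by push_cast; ring
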